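/- Let X be a totally bounded metric space, Y dense in X, f : Y → X with d(f(x), f(y)) ≥ d(x, y) for all x, y ∈ Y, and ε > 0. If (x_1, ..., x_n) is a maximal ε-net of Y whose gauge G satisfies G > g_ε(X)/(1+ε), then (f(x_1), ..., f(x_n)) is also a maximal ε-net of X and d(x_i, x_j) ≤ d(f(x_i), f(x_j)) < (1+ε) d(x_i, x_j) for all i ≠ j. -/

import Mathlib

/-! The image tuple `f ∘ x` is again ε-separated, since `f` does not shrink distances, so its
gauge is at most `g_ε(X)`, which is finite because `X` is bounded. If some pair were stretched by
a factor `1 + ε`, then, all other factors of the gauge being non-decreasing as well, the gauge of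
`f ∘ x` would be at least `(1 + ε) G(x) > g_ε(X)`. -/

open Finset

theorem Finset.mul_prod_le_prod_of_le {ι R : Type*} [CommSemiring R] [PartialOrder R]
    [IsOrderedRing R] {s : Finset ι} {a b : ι → R} {c : R} {k : ι}
    (ha : ∀ i ∈ s, 0 ≤ a i) (hab : ∀ i ∈ s, a i ≤ b i) (hk : k ∈ s)
    (hck : c * a k ≤ b k) :
    c * ∏ i ∈ s, a i ≤ ∏ i ∈ s, b i := by
  classical
  rw [← mul_prod_erase s a hk, ← mul_prod_erase s b hk, ← mul_assoc]
  exact mul_le_mul hck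
    (prod_le_prod (fun i hi => ha i (mem_of_mem_erase hi)) fun i hi => hab i (mem_of_mem_erase hi))
    (prod_nonneg fun i hi => ha i (mem_of_mem_erase hi)) ((ha k hk).trans (hab k hk))

namespace Metric

variable {X : Type*} [PseudoMetricSpace X] {n : ℕ}

noncomputable def tupleGauge (z : Fin n → X) : ℝ :=
  ∏ p ∈ univ.filter (fun p : Fin n × Fin n => p.1 < p.2), dist (z p.1) (z p.2)

theorem bddAbove_range_tupleGauge (hX : Bornology.IsBounded (Set.univ : Set X)) :
    BddAbove (Set.range (tupleGauge : (Fin n → X) → ℝ)) := by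
  obtain ⟨C, hC⟩ := isBounded_iff.mp hX
  refine ⟨max C 1 ^ (univ.filter (fun p : Fin n × Fin n => p.1 < p.2)).card, ?_⟩
  rintro _ ⟨z, rfl⟩
  calc tupleGauge z ≤ ∏ _p ∈ univ.filter (fun p : Fin n × Fin n => p.1 < p.2), max C 1 :=
        prod_le_prod (fun _ _ => dist_nonneg) fun _ _ =>
          le_max_of_le_left (hC (Set.mem_univ _) (Set.mem_univ _))
    _ = _ := prod_const _

theorem dist_min_max {ι : Type*} [LinearOrder ι] (z : ι → X) (i j : ι) :
    dist (z (min i j)) (z (max i j)) = dist (z i) (z j) := by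
  rcases le_total i j with h | h
  · rw [min_eq_left h, max_eq_right h]
  · rw [min_eq_right h, max_eq_left h, dist_comm]

theorem mul_tupleGauge_le {Z : Type*} [PseudoMetricSpace Z] {z : Fin n → X} {w : Fin n → Z}
    {c : ℝ} (hzw : ∀ i j, dist (z i) (z j) ≤ dist (w i) (w j)) {i j : Fin n} (hij : i ≠ j)
    (hc : c * dist (z i) (z j) ≤ dist (w i) (w j)) :
    c * tupleGauge z ≤ tupleGauge w := by
  refine mul_prod_le_prod_of_le (fun _ _ => dist_nonneg) (fun p _ => hzw p.1 p.2)
    (k := (min i j, max i j)) ?_ ?_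
  · simpa only [mem_filter, mem_univ, true_and] using min_lt_max.mpr hij
  · simpa only [dist_min_max] using hc

end Metric

open Metric

theorem image_of_near_maximal_net_general {X : Type*} [MetricSpace X]
    (hX : TotallyBounded (Set.univ : Set X))
    (Y : Set X)
    (f : Y → X) (hf : ∀ x y : Y, dist (x : X) (y : X) ≤ dist (f x) (f y))
    (ε : ℝ) (hε : 0 < ε) (n : ℕ)
    (x : Fin n → Y)
    (hsep : ∀ i j : Fin n, i ≠ j → ε < dist (x i : X) (x j : X))
    (hG : sSup {r : ℝ | ∃ z : Fin n → X,
        (∀ i j : Fin n, i ≠ j → ε < dist (z i) (z j)) ∧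
        r = ∏ p ∈ Finset.univ.filter (fun p : Fin n × Fin n => p.1 < p.2),
              dist (z p.1) (z p.2)} / (1 + ε) <
      ∏ p ∈ Finset.univ.filter (fun p : Fin n × Fin n => p.1 < p.2),
        dist (x p.1 : X) (x p.2 : X)) :
    (∀ i j : Fin n, i ≠ j → ε < dist (f (x i)) (f (x j))) ∧
    (∀ i j : Fin n, i ≠ j →
      dist (x i : X) (x j : X) ≤ dist (f (x i)) (f (x j)) ∧
      dist (f (x i)) (f (x j)) < (1 + ε) * dist (x i : X) (x j : X)) := by
  have hfsep : ∀ i j : Fin n, i ≠ j → ε < dist (f (x i)) (f (x j)) := fun i j hij =>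
    (hsep i j hij).trans_le (hf (x i) (x j))
  refine ⟨hfsep, fun i j hij => ⟨hf _ _, ?_⟩⟩
  by_contra! hstretch
  have himage_le : tupleGauge (fun k => f (x k)) ≤ sSup {r : ℝ | ∃ z : Fin n → X,
      (∀ i j : Fin n, i ≠ j → ε < dist (z i) (z j)) ∧ r = tupleGauge z} :=
    le_csSup ((bddAbove_range_tupleGauge hX.isBounded).mono <| by
      rintro _ ⟨z, -, rfl⟩
      exact ⟨z, rfl⟩) ⟨_, hfsep, rfl⟩
  have hstretch_gauge : (1 + ε) * tupleGauge (fun k => (x k : X)) ≤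
      tupleGauge (fun k => f (x k)) :=
    mul_tupleGauge_le (fun i j => hf (x i) (x j)) hij hstretch
  refine hG.not_ge ?_
  rw [le_div_iff₀ (by linarith), mul_comm]
  exact hstretch_gauge.trans himage_le

theorem image_of_near_maximal_net {X : Type*} [MetricSpace X]
    (hX : TotallyBounded (Set.univ : Set X))
    (Y : Set X) (hY : Dense Y)
    (f : Y → X) (hf : ∀ x y : Y, dist (x : X) (y : X) ≤ dist (f x) (f y))
    (ε : ℝ) (hε : 0 < ε) (n : ℕ)
    (hmax : IsGreatest {m : ℕ | ∃ z : Fin m → X,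
      ∀ i j : Fin m, i ≠ j → ε < dist (z i) (z j)} n)
    (x : Fin n → Y)
    (hsep : ∀ i j : Fin n, i ≠ j → ε < dist (x i : X) (x j : X))
    (hG : sSup {r : ℝ | ∃ z : Fin n → X,
        (∀ i j : Fin n, i ≠ j → ε < dist (z i) (z j)) ∧
        r = ∏ p ∈ Finset.univ.filter (fun p : Fin n × Fin n => p.1 < p.2),
              dist (z p.1) (z p.2)} / (1 + ε) <
      ∏ p ∈ Finset.univ.filter (fun p : Fin n × Fin n => p.1 < p.2),
        dist (x p.1 : X) (x p.2 : X)) :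
    (∀ i j : Fin n, i ≠ j → ε < dist (f (x i)) (f (x j))) ∧
    (∀ i j : Fin n, i ≠ j →
      dist (x i : X) (x j : X) ≤ dist (f (x i)) (f (x j)) ∧
      dist (f (x i)) (f (x j)) < (1 + ε) * dist (x i : X) (x j : X)) :=
  image_of_near_maximal_net_general hX Y f hf ε hε n x hsep hG
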